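/- Let p be a prime, n a positive integer, and C_1 a self-orthogonal code of length n over Z_p of dimension k_1; when p = 2, assume further that C_1 is doubly even. Then the number of free self-orthogonal codes C ⊆ (Z_{p^2})^n such that π(C) = ι^{-1}(C) = C_1 is p^{k_1(2n−3k_1−1)/2} if p is odd, and 2^{k_1(2n−3k_1+1)/2} if p = 2. -/

import Mathlib

/-!
Choose a basis g₁, …, g_k of C₁ and lift it coordinatewise to g̃ᵢ over Z_{p²}. A free code C with
π(C) = ι⁻¹(C) = C₁ is generated by rows g̃ᵢ + p aᵢ, and two matrices A = (aᵢ) give the same code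
exactly when their rows differ by elements of C₁, so each code comes from p^{k²} matrices.
Writing g̃ᵢ · g̃ⱼ = p Sᵢⱼ, the code is self-orthogonal iff X + Xᵀ = -S for X = A gᵀ. Since A ↦ A gᵀ
is onto, the solutions form a coset of a space of dimension kn - r, with r the rank of X ↦ X + Xᵀ:
r = k(k+1)/2 for odd p and r = k(k-1)/2 for p = 2. The coset is nonempty: for odd p take
X = -S/2; for p = 2 one has 2Sᵢᵢ ≡ wt(gᵢ) (mod 4), so S has zero diagonal because C₁ is doubly
even, and X can be taken to be the strictly lower triangular part of S = -S. Hence there are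
p^{kn - r - k²} codes.
-/

open scoped BigOperators

set_option maxHeartbeats 1000000

namespace Paper

/-- Self-orthogonality of a set of vectors w.r.t. the standard inner product. -/
def sorth {m : ℕ} {ι : Type} [Fintype ι] (S : Set (ι → ZMod m)) : Prop :=
  ∀ x ∈ S, ∀ y ∈ S, ∑ i, x i * y i = 0

/-- The dual (as a set) of a set of vectors w.r.t. the standard inner product. -/
def dualSet {m : ℕ} {ι : Type} [Fintype ι] (S : Set (ι → ZMod m)) : Set (ι → ZMod m) :=
  {x | ∀ y ∈ S, ∑ i, x i * y i = 0}

/-- A set of vectors is doubly even if every element has Hamming weight divisible by 4. -/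
def doublyEven {m : ℕ} {ι : Type} [Fintype ι] (S : Set (ι → ZMod m)) : Prop :=
  ∀ x ∈ S, 4 ∣ (Finset.univ.filter fun i => x i ≠ 0).card

/-- Coordinatewise reduction map `(Z_{p^2})^ι → (Z_p)^ι`. -/
def res (p : ℕ) [Fact p.Prime] {ι : Type} (v : ι → ZMod (p ^ 2)) : ι → ZMod p :=
  fun i => ZMod.castHom (dvd_pow_self p (by norm_num)) (ZMod p) (v i)

/-- The injection `(Z_p)^ι → (Z_{p^2})^ι` induced by `Z_p ≅ pZ_{p^2} ⊆ Z_{p^2}`. -/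
def iot (p : ℕ) {ι : Type} (v : ι → ZMod p) : ι → ZMod (p ^ 2) :=
  fun i => (p : ZMod (p ^ 2)) * (ZMod.cast (v i))

/-- Coordinatewise reduction map `(Z_4)^ι → (Z_2)^ι`. -/
def res4 {ι : Type} (v : ι → ZMod 4) : ι → ZMod 2 :=
  fun i => ZMod.castHom (by norm_num : (2:ℕ) ∣ 4) (ZMod 2) (v i)

/-- The injection `(Z_2)^ι → (Z_4)^ι`. -/
def iot4 {ι : Type} (v : ι → ZMod 2) : ι → ZMod 4 :=
  fun i => (2 : ZMod 4) * (ZMod.cast (v i))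

/-- Euclidean weight on `Z_4`. -/
def ewt (x : ZMod 4) : ℕ := if x = 0 then 0 else if x = 2 then 4 else 1

/-- A quaternary code is even if every codeword has Euclidean weight divisible by 8. -/
def evenCode {ι : Type} [Fintype ι] (S : Set (ι → ZMod 4)) : Prop :=
  ∀ x ∈ S, 8 ∣ ∑ i, ewt (x i)

/-- The code over `Z_q` generated by the rows of an integer matrix. -/
def intRowSpan (q : ℕ) {κ ι : Type} (G : Matrix κ ι ℤ) :
    Submodule (ZMod q) (ι → ZMod q) :=
  Submodule.span (ZMod q) (Set.range fun i => fun c => ((G i c : ℤ) : ZMod q))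

/-- The Gaussian binomial coefficient `[n choose k]_p`. -/
def gauss (p n k : ℕ) : ℚ :=
  ∏ i ∈ Finset.range k, ((p : ℚ) ^ n - (p : ℚ) ^ i) / ((p : ℚ) ^ k - (p : ℚ) ^ i)

open scoped Matrix

section Symmetrize

variable (K : Type*) [Field K] (ι : Type*)

def symmetricMatrices : Submodule K (Matrix ι ι K) where
  carrier := {X | X.IsSymm}
  add_mem' := Matrix.IsSymm.add
  zero_mem' := Matrix.isSymm_zero
  smul_mem' c _ hX := hX.smul c

def symmetricMatricesEquivSym2 : symmetricMatrices K ι ≃ₗ[K] (Sym2 ι → K) where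
  toFun X := Sym2.lift ⟨X.1, fun i j => (X.2.apply i j).symm⟩
  invFun f := ⟨Matrix.of fun i j => f s(i, j), Matrix.IsSymm.ext fun i j => by simp [Sym2.eq_swap]⟩
  map_add' X Y := by ext z; induction z using Sym2.ind; simp
  map_smul' c X := by ext z; induction z using Sym2.ind; simp
  left_inv X := by ext i j; simp
  right_inv f := by ext z; induction z using Sym2.ind; simp

theorem finrank_symmetricMatrices [Fintype ι] :
    Module.finrank K (symmetricMatrices K ι) = (Fintype.card ι + 1).choose 2 := by
  rw [(symmetricMatricesEquivSym2 K ι).finrank_eq, Module.finrank_fintype_fun_eq_card, Sym2.card]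

def addTranspose : Matrix ι ι K →ₗ[K] Matrix ι ι K :=
  LinearMap.id + (Matrix.transposeLinearEquiv ι ι K K).toLinearMap

variable {K ι}

@[simp]
theorem addTranspose_apply (X : Matrix ι ι K) : addTranspose K ι X = X + Xᵀ := rfl

theorem range_addTranspose_of_two_ne_zero (h2 : (2 : K) ≠ 0) :
    LinearMap.range (addTranspose K ι) = symmetricMatrices K ι := by
  ext S
  refine ⟨?_, fun hS => ⟨(2⁻¹ : K) • S, ?_⟩⟩
  · rintro ⟨X, rfl⟩
    exact Matrix.isSymm_add_transpose_self X
  · rw [addTranspose_apply, Matrix.transpose_smul, hS.eq, ← add_smul, ← two_mul,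
      mul_inv_cancel₀ h2, one_smul]

theorem ker_addTranspose_of_charP_two [CharP K 2] :
    LinearMap.ker (addTranspose K ι) = symmetricMatrices K ι := by
  ext X
  rw [LinearMap.mem_ker, addTranspose_apply, ← Matrix.ext_iff]
  simp only [Matrix.add_apply, Matrix.transpose_apply, Matrix.zero_apply, CharTwo.add_eq_zero]
  exact ⟨fun h => Matrix.IsSymm.ext fun i j => (h i j).symm, fun h i j => (h.apply i j).symm⟩

theorem mem_range_addTranspose_of_diag_eq_zero [LinearOrder ι] {S : Matrix ι ι K}
    (hS : S.IsSymm) (hdiag : ∀ i, S i i = 0) : S ∈ LinearMap.range (addTranspose K ι) := by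
  refine ⟨Matrix.of fun i j => if j < i then S i j else 0, ?_⟩
  ext i j
  rcases lt_trichotomy i j with h | rfl | h
  · simpa [h, h.not_gt] using hS.apply i j
  · simp [hdiag]
  · simp [h, h.not_gt]

end Symmetrize

theorem mulVecLin_surjective_of_linearIndependent {K m n : Type*} [Field K] [Fintype m]
    [Fintype n] {M : Matrix m n K} (hM : LinearIndependent K M.row) :
    Function.Surjective M.mulVecLin := by
  rw [← LinearMap.range_eq_top]
  apply Submodule.eq_top_of_finrank_eq
  rw [← Matrix.rank, hM.rank_matrix, Module.finrank_fintype_fun_eq_card]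

section Pairing

variable {K : Type*} [Field K] {ι : Type*} [Fintype ι] {k : ℕ} (g : Fin k → ι → K)

def pairing : (Fin k → ι → K) →ₗ[K] Matrix (Fin k) (Fin k) K where
  toFun A := Matrix.of fun i j => A i ⬝ᵥ g j
  map_add' A B := by ext i j; simp [add_dotProduct]
  map_smul' c A := by ext i j; simp [smul_dotProduct]

def symmPairing : (Fin k → ι → K) →ₗ[K] Matrix (Fin k) (Fin k) K :=
  addTranspose K (Fin k) ∘ₗ pairing g

theorem symmPairing_apply (A : Fin k → ι → K) (i j : Fin k) :
    symmPairing g A i j = A i ⬝ᵥ g j + A j ⬝ᵥ g i :=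
  rfl

variable {g}

theorem pairing_surjective (hg : LinearIndependent K g) : Function.Surjective (pairing g) := by
  intro X
  choose A hA using fun i => mulVecLin_surjective_of_linearIndependent (M := Matrix.of g) hg (X i)
  refine ⟨A, Matrix.ext fun i j => ?_⟩
  rw [← hA i]
  exact dotProduct_comm _ _

theorem range_symmPairing (hg : LinearIndependent K g) :
    LinearMap.range (symmPairing g) = LinearMap.range (addTranspose K (Fin k)) := by
  rw [symmPairing, LinearMap.range_comp, LinearMap.range_eq_top.2 (pairing_surjective hg),
    Submodule.map_top]

theorem finrank_ker_symmPairing_add (hg : LinearIndependent K g) :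
    Module.finrank K (LinearMap.ker (symmPairing g)) +
      Module.finrank K (LinearMap.range (addTranspose K (Fin k))) = k * Fintype.card ι := by
  rw [← range_symmPairing hg, add_comm, LinearMap.finrank_range_add_finrank_ker,
    Module.finrank_pi_fintype]
  simp

theorem two_mul_le_card_of_dotProduct_eq_zero (hg : LinearIndependent K g)
    (horth : ∀ i j, g i ⬝ᵥ g j = 0) : 2 * k ≤ Fintype.card ι := by
  have hle : Submodule.span K (Set.range g) ≤ LinearMap.ker (Matrix.of g).mulVecLin := by
    rw [Submodule.span_le]
    rintro _ ⟨i, rfl⟩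
    exact funext fun j => horth j i
  have hrank := LinearMap.finrank_range_add_finrank_ker (Matrix.of g).mulVecLin
  rw [LinearMap.range_eq_top.2 (mulVecLin_surjective_of_linearIndependent (M := Matrix.of g) hg),
    finrank_top, Module.finrank_fin_fun, Module.finrank_fintype_fun_eq_card] at hrank
  have hspan := Submodule.finrank_mono hle
  rw [finrank_span_eq_card hg, Fintype.card_fin] at hspan
  omega

end Pairing

theorem exists_linearIndependent_span_eq {K V : Type*} [Field K] [AddCommGroup V] [Module K V]
    (C : Submodule K V) [FiniteDimensional K C] {k : ℕ} (hk : Module.finrank K C = k) :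
    ∃ g : Fin k → V, LinearIndependent K g ∧ Submodule.span K (Set.range g) = C := by
  let b := Module.finBasisOfFinrankEq K C hk
  refine ⟨C.subtype ∘ b, b.linearIndependent.map' C.subtype C.ker_subtype, ?_⟩
  rw [Set.range_comp, Submodule.span_image, b.span_eq, Submodule.map_top, Submodule.range_subtype]

theorem natCard_range_mul_natCard {G β : Type*} [AddGroup G] (H : AddSubgroup G) {f : G → β}
    (hf : ∀ x y, f x = f y ↔ -x + y ∈ H) : Nat.card (Set.range f) * Nat.card H = Nat.card G := by
  rw [H.card_eq_card_quotient_mul_card_addSubgroup]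
  congr 1
  exact Nat.card_congr ((Setoid.quotientKerEquivRange f).symm.trans
    (Quotient.congrRight fun x y => (hf x y).trans QuotientAddGroup.leftRel_apply.symm))

theorem natCard_pi_univ_const {K M κ : Type*} [Ring K] [AddCommGroup M] [Module K M] [Fintype κ]
    (C : Submodule K M) :
    Nat.card (Submodule.pi Set.univ fun _ : κ => C) = Nat.card C ^ Fintype.card κ := by
  rw [Nat.card_congr ((Equiv.subtypeEquivRight fun B => by simp [Submodule.mem_pi]).trans
    (Equiv.subtypePiEquivPi (p := fun _ b => b ∈ C))), Nat.card_pi, Finset.prod_const,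
    Finset.card_univ]

theorem two_mul_choose_two_succ (k : ℕ) : 2 * (k + 1).choose 2 = (k + 1) * k := by
  obtain ⟨m, hm⟩ := Nat.even_mul_succ_self k
  rw [Nat.choose_two_right, Nat.add_sub_cancel, Nat.mul_comm (k + 1) k, hm]
  omega

theorem eq_pow_sub_of_mul_pow_eq {p N a b : ℕ} (hp : 1 < p) (h : N * p ^ a = p ^ b) :
    N = p ^ (b - a) := by
  have hab : a ≤ b := (Nat.pow_dvd_pow_iff_le_right hp).1 ⟨N, by rw [← h, mul_comm]⟩
  rw [← Nat.pow_div hab (by omega), ← h, Nat.mul_div_cancel _ (by positivity)]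

theorem exponent_eq_of_two_ne {k n d : ℕ} (hkn : 2 * k ≤ n) (hd : d + (k + 1).choose 2 = k * n) :
    d - k * k = k * (2 * n - 3 * k - 1) / 2 := by
  have hc := two_mul_choose_two_succ k
  rcases Nat.eq_zero_or_pos k with rfl | hk
  · simp_all
  refine (Nat.div_eq_of_eq_mul_left two_pos ?_).symm
  have h1 : 3 * k ≤ 2 * n := by omega
  have h1' : 1 ≤ 2 * n - 3 * k := by omega
  have h2 : k * k ≤ d := by nlinarith
  zify [h1, h1', h2] at hc hd ⊢
  linear_combination hc - 2 * hd

theorem exponent_eq_of_two {k n d r : ℕ} (hkn : 2 * k ≤ n) (hd : d + r = k * n)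
    (hr : r + (k + 1).choose 2 = k * k) :
    d - k * k = k * (2 * n - 3 * k + 1) / 2 := by
  have hc := two_mul_choose_two_succ k
  refine (Nat.div_eq_of_eq_mul_left two_pos ?_).symm
  have h1 : 3 * k ≤ 2 * n := by omega
  have h2 : k * k ≤ d := by nlinarith
  zify [h1, h2] at hc hd hr ⊢
  linear_combination 2 * hr - 2 * hd - hc

section Residue

variable (p : ℕ)

theorem natCast_mul_self_eq_zero : (p : ZMod (p ^ 2)) * p = 0 := by
  rw [← Nat.cast_mul, ← sq, ZMod.natCast_self]

variable [Fact p.Prime]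

abbrev reduce : ZMod (p ^ 2) →+* ZMod p := ZMod.castHom (dvd_pow_self p two_ne_zero) (ZMod p)

instance : RingHomSurjective (reduce p) := ⟨ZMod.castHom_surjective _⟩

theorem two_ne_zero_of_ne_two (hp : p ≠ 2) : (2 : ZMod p) ≠ 0 :=
  Ring.two_ne_zero (by rwa [ZMod.ringChar_zmod_n])

theorem reduce_cast (x : ZMod p) : reduce p (ZMod.cast x) = x :=
  ZMod.cast_cast_zmod_of_le (Nat.le_self_pow two_ne_zero p) x

theorem natCast_mul_cast_reduce (z : ZMod (p ^ 2)) :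
    (p : ZMod (p ^ 2)) * ZMod.cast (reduce p z) = p * z := by
  obtain ⟨a, rfl⟩ : ∃ a : ℕ, (a : ZMod (p ^ 2)) = z := ⟨z.val, ZMod.natCast_zmod_val z⟩
  rw [map_natCast, ZMod.cast_eq_val, ZMod.val_natCast]
  conv_rhs => rw [← Nat.div_add_mod a p]
  push_cast
  linear_combination (-(a / p : ℕ) : ZMod (p ^ 2)) * natCast_mul_self_eq_zero p

theorem exists_eq_natCast_mul_of_reduce_eq_zero {z : ZMod (p ^ 2)} (hz : reduce p z = 0) :
    ∃ w, z = p * w := by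
  obtain ⟨a, rfl⟩ : ∃ a : ℕ, (a : ZMod (p ^ 2)) = z := ⟨z.val, ZMod.natCast_zmod_val z⟩
  rw [map_natCast, ZMod.natCast_eq_zero_iff] at hz
  obtain ⟨b, rfl⟩ := hz
  exact ⟨b, by push_cast; rfl⟩

def torsionEmb : ZMod p →+ ZMod (p ^ 2) where
  toFun x := p * ZMod.cast x
  map_zero' := by simp
  map_add' x y := by
    rw [← mul_add, ← natCast_mul_cast_reduce p (ZMod.cast x + ZMod.cast y), map_add,
      reduce_cast, reduce_cast]

theorem torsionEmb_apply (x : ZMod p) : torsionEmb p x = p * ZMod.cast x := rfl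

theorem natCast_mul_eq_torsionEmb (z : ZMod (p ^ 2)) :
    (p : ZMod (p ^ 2)) * z = torsionEmb p (reduce p z) :=
  (natCast_mul_cast_reduce p z).symm

theorem torsionEmb_injective : Function.Injective (torsionEmb p) := by
  refine (injective_iff_map_eq_zero _).2 fun x hx => ?_
  rw [torsionEmb_apply, ZMod.cast_eq_val, ← Nat.cast_mul, ZMod.natCast_eq_zero_iff, sq,
    Nat.mul_dvd_mul_iff_left (Fact.out : p.Prime).pos] at hx
  rw [← ZMod.natCast_zmod_val x, ZMod.natCast_eq_zero_iff]
  exact hx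

theorem reduce_torsionEmb (x : ZMod p) : reduce p (torsionEmb p x) = 0 := by
  rw [torsionEmb_apply, map_mul, map_natCast, ZMod.natCast_self, zero_mul]

theorem exists_torsionEmb_eq_of_reduce_eq_zero {z : ZMod (p ^ 2)} (hz : reduce p z = 0) :
    ∃ x, torsionEmb p x = z := by
  obtain ⟨w, rfl⟩ := exists_eq_natCast_mul_of_reduce_eq_zero p hz
  exact ⟨reduce p w, (natCast_mul_eq_torsionEmb p w).symm⟩

end Residue

section Vectors

variable (p : ℕ) [Fact p.Prime] {ι : Type}

def resLinear : (ι → ZMod (p ^ 2)) →ₛₗ[reduce p] (ι → ZMod p) where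
  toFun := res p
  map_add' x y := funext fun i => map_add (reduce p) (x i) (y i)
  map_smul' c x := funext fun i => map_mul (reduce p) c (x i)

theorem coe_resLinear :
    ⇑(resLinear p : (ι → ZMod (p ^ 2)) →ₛₗ[reduce p] (ι → ZMod p)) = res p :=
  rfl

def iotHom : (ι → ZMod p) →+ (ι → ZMod (p ^ 2)) := (torsionEmb p).compLeft ι

theorem coe_iotHom : ⇑(iotHom p : (ι → ZMod p) →+ (ι → ZMod (p ^ 2))) = iot p := rfl

theorem iot_injective : Function.Injective (iot p (ι := ι)) :=
  fun _ _ h => funext fun i => torsionEmb_injective p (congrFun h i)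

theorem res_iot (v : ι → ZMod p) : res p (iot p v) = 0 :=
  funext fun i => reduce_torsionEmb p (v i)

theorem iot_res (y : ι → ZMod (p ^ 2)) : iot p (res p y) = (p : ZMod (p ^ 2)) • y :=
  funext fun i => (natCast_mul_eq_torsionEmb p (y i)).symm

theorem exists_iot_eq_of_res_eq_zero {y : ι → ZMod (p ^ 2)} (hy : res p y = 0) :
    ∃ v, iot p v = y := by
  choose v hv using fun i => exists_torsionEmb_eq_of_reduce_eq_zero p (congrFun hy i)
  exact ⟨v, funext hv⟩

def lift (v : ι → ZMod p) : ι → ZMod (p ^ 2) := fun i => ZMod.cast (v i)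

theorem res_lift (v : ι → ZMod p) : res p (lift p v) = v :=
  funext fun i => reduce_cast p (v i)

variable [Fintype ι]

theorem reduce_dotProduct (x y : ι → ZMod (p ^ 2)) :
    reduce p (x ⬝ᵥ y) = res p x ⬝ᵥ res p y :=
  RingHom.map_dotProduct _ x y

theorem iot_dotProduct (u : ι → ZMod p) (y : ι → ZMod (p ^ 2)) :
    iot p u ⬝ᵥ y = torsionEmb p (u ⬝ᵥ res p y) := by
  simp only [dotProduct, map_sum]
  refine Finset.sum_congr rfl fun i _ => ?_
  rw [iot, mul_assoc, natCast_mul_eq_torsionEmb, map_mul, reduce_cast]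
  rfl

end Vectors

theorem sorth_span_iff {m : ℕ} {ι : Type} [Fintype ι] (s : Set (ι → ZMod m)) :
    sorth (Submodule.span (ZMod m) s : Set (ι → ZMod m)) ↔ ∀ x ∈ s, ∀ y ∈ s, x ⬝ᵥ y = 0 := by
  refine ⟨fun h x hx y hy => h x (Submodule.subset_span hx) y (Submodule.subset_span hy),
    fun h x hx y hy => ?_⟩
  show x ⬝ᵥ y = 0
  induction hx using Submodule.span_induction with
  | mem x hx =>
    induction hy using Submodule.span_induction with
    | mem y hy => exact h x hx y hy
    | zero => exact dotProduct_zero x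
    | add y z _ _ hy hz => rw [dotProduct_add, hy, hz, add_zero]
    | smul c y _ hy => rw [dotProduct_smul, hy, smul_zero]
  | zero => exact zero_dotProduct y
  | add x z _ _ hx hz => rw [add_dotProduct, hx, hz, add_zero]
  | smul c x _ hx => rw [smul_dotProduct, hx, smul_zero]

section Codes

variable (p : ℕ) [Fact p.Prime] {ι : Type}

theorem res_image_subset_iot_preimage (C : Submodule (ZMod (p ^ 2)) (ι → ZMod (p ^ 2))) :
    res p '' (C : Set (ι → ZMod (p ^ 2))) ⊆ iot p ⁻¹' C := by
  rintro _ ⟨y, hy, rfl⟩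
  rw [Set.mem_preimage, iot_res]
  exact C.smul_mem _ hy

theorem eq_of_le_of_res_of_iot {C D : Submodule (ZMod (p ^ 2)) (ι → ZMod (p ^ 2))} (hDC : D ≤ C)
    (hres : res p '' (C : Set (ι → ZMod (p ^ 2))) ⊆ res p '' D)
    (hiot : iot p ⁻¹' (C : Set (ι → ZMod (p ^ 2))) ⊆ iot p ⁻¹' D) : D = C := by
  refine le_antisymm hDC fun x hx => ?_
  obtain ⟨d, hd, hdx⟩ := hres ⟨x, hx, rfl⟩
  obtain ⟨v, hv⟩ := exists_iot_eq_of_res_eq_zero p (y := x - d) <| by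
    rw [← coe_resLinear, map_sub, coe_resLinear, hdx, sub_self]
  have hvC : v ∈ iot p ⁻¹' (C : Set (ι → ZMod (p ^ 2))) := by
    rw [Set.mem_preimage, hv]
    exact C.sub_mem hx (hDC hd)
  simpa [hv] using D.add_mem hd (hiot hvC)

end Codes

section LiftCode

variable {p : ℕ} [Fact p.Prime] {ι : Type} {k : ℕ} (g : Fin k → ι → ZMod p)

def liftGen (A : Fin k → ι → ZMod p) (i : Fin k) : ι → ZMod (p ^ 2) :=
  lift p (g i) + iot p (A i)

def liftCode (A : Fin k → ι → ZMod p) : Submodule (ZMod (p ^ 2)) (ι → ZMod (p ^ 2)) :=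
  Submodule.span _ (Set.range (liftGen g A))

theorem res_liftGen (A : Fin k → ι → ZMod p) (i : Fin k) : res p (liftGen g A i) = g i := by
  rw [liftGen, ← coe_resLinear, map_add, coe_resLinear, res_lift, res_iot, add_zero]

theorem res_image_liftCode (A : Fin k → ι → ZMod p) :
    res p '' (liftCode g A : Set (ι → ZMod (p ^ 2))) = Submodule.span (ZMod p) (Set.range g) := by
  rw [liftCode, ← coe_resLinear, ← Submodule.map_coe, Submodule.map_span, ← Set.range_comp,
    show ⇑(resLinear p) ∘ liftGen g A = g from funext (res_liftGen g A)]

variable {g}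

theorem iot_preimage_liftCode (hg : LinearIndependent (ZMod p) g) (A : Fin k → ι → ZMod p) :
    iot p ⁻¹' (liftCode g A : Set (ι → ZMod (p ^ 2))) = Submodule.span (ZMod p) (Set.range g) := by
  refine subset_antisymm (fun v hv => ?_)
    (res_image_liftCode g A ▸ res_image_subset_iot_preimage p _)
  obtain ⟨c, hc⟩ := (Submodule.mem_span_range_iff_exists_fun _).1 hv
  have hred : ∀ i, reduce p (c i) = 0 := by
    refine Fintype.linearIndependent_iff.1 hg _ ?_
    have := congrArg (resLinear p) hc
    simpa [map_sum, coe_resLinear, res_liftGen, res_iot] using this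
  choose w hw using fun i => exists_eq_natCast_mul_of_reduce_eq_zero p (hred i)
  have hv' : iot p v = iot p (res p (∑ i, w i • liftGen g A i)) := by
    rw [iot_res, ← hc, Finset.smul_sum]
    simp [hw, mul_smul]
  rw [iot_injective p hv', ← res_image_liftCode g A]
  exact ⟨_, Submodule.sum_mem _ fun i _ => Submodule.smul_mem _ _ (Submodule.subset_span ⟨i, rfl⟩),
    rfl⟩

theorem exists_liftCode_eq (hg : LinearIndependent (ZMod p) g)
    {C : Submodule (ZMod (p ^ 2)) (ι → ZMod (p ^ 2))}
    (hres : res p '' (C : Set (ι → ZMod (p ^ 2))) = Submodule.span (ZMod p) (Set.range g))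
    (hiot : iot p ⁻¹' (C : Set (ι → ZMod (p ^ 2))) = Submodule.span (ZMod p) (Set.range g)) :
    ∃ A, liftCode g A = C := by
  have hlift : ∀ i, ∃ y ∈ C, res p y = g i := fun i =>
    (hres ▸ Submodule.subset_span ⟨i, rfl⟩ : g i ∈ res p '' (C : Set (ι → ZMod (p ^ 2))))
  choose y hyC hy using hlift
  choose A hA using fun i => exists_iot_eq_of_res_eq_zero p (y := y i - lift p (g i)) <| by
    rw [← coe_resLinear, map_sub, coe_resLinear, hy, res_lift, sub_self]
  refine ⟨A, eq_of_le_of_res_of_iot p ?_ ?_ ?_⟩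
  · rw [liftCode, Submodule.span_le]
    rintro _ ⟨i, rfl⟩
    rw [liftGen, hA, add_sub_cancel]
    exact hyC i
  · rw [hres, res_image_liftCode]
  · rw [hiot, iot_preimage_liftCode hg]

theorem liftGen_sub_liftGen (A A' : Fin k → ι → ZMod p) (i : Fin k) :
    liftGen g A' i - liftGen g A i = iot p (A' i - A i) := by
  rw [liftGen, liftGen, ← coe_iotHom, map_sub]
  abel

theorem liftCode_eq_liftCode_iff (hg : LinearIndependent (ZMod p) g)
    {A A' : Fin k → ι → ZMod p} :
    liftCode g A = liftCode g A' ↔ ∀ i, A' i - A i ∈ Submodule.span (ZMod p) (Set.range g) := by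
  have hle : ∀ A A' : Fin k → ι → ZMod p,
      (∀ i, A' i - A i ∈ Submodule.span (ZMod p) (Set.range g)) → liftCode g A' ≤ liftCode g A := by
    intro A A' h
    rw [liftCode, Submodule.span_le]
    rintro _ ⟨i, rfl⟩
    rw [← sub_add_cancel (liftGen g A' i) (liftGen g A i), liftGen_sub_liftGen]
    refine add_mem ?_ (Submodule.subset_span ⟨i, rfl⟩)
    rw [← SetLike.mem_coe, ← Set.mem_preimage, iot_preimage_liftCode hg]
    exact h i
  refine ⟨fun h i => ?_, fun h => le_antisymm (hle A' A fun i => ?_) (hle A A' h)⟩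
  · rw [← SetLike.mem_coe, ← iot_preimage_liftCode hg A, Set.mem_preimage, ← liftGen_sub_liftGen]
    exact sub_mem (h ▸ Submodule.subset_span ⟨i, rfl⟩) (Submodule.subset_span ⟨i, rfl⟩)
  · simpa using neg_mem (h i)

end LiftCode

section SelfOrthogonal

variable {p : ℕ} [Fact p.Prime] {ι : Type} [Fintype ι] {k : ℕ} {g : Fin k → ι → ZMod p}

theorem liftGen_dotProduct (A : Fin k → ι → ZMod p) (i j : Fin k) :
    liftGen g A i ⬝ᵥ liftGen g A j =
      lift p (g i) ⬝ᵥ lift p (g j) + torsionEmb p (symmPairing g A i j) := by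
  rw [liftGen, liftGen, add_dotProduct, dotProduct_add, dotProduct_add,
    dotProduct_comm (lift p (g i)) (iot p (A j)), iot_dotProduct, iot_dotProduct, iot_dotProduct,
    res_lift, res_lift, res_iot, dotProduct_zero, map_zero, add_zero, symmPairing_apply, map_add]
  abel

theorem sorth_liftCode_iff (A : Fin k → ι → ZMod p) :
    sorth (liftCode g A : Set (ι → ZMod (p ^ 2))) ↔
      ∀ i j, lift p (g i) ⬝ᵥ lift p (g j) + torsionEmb p (symmPairing g A i j) = 0 := by
  simp only [liftCode, sorth_span_iff, Set.forall_mem_range, liftGen_dotProduct]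

theorem sorth_liftCode_iff_sub_mem_ker {A₀ : Fin k → ι → ZMod p}
    (hA₀ : sorth (liftCode g A₀ : Set (ι → ZMod (p ^ 2)))) (A : Fin k → ι → ZMod p) :
    sorth (liftCode g A : Set (ι → ZMod (p ^ 2))) ↔ A - A₀ ∈ LinearMap.ker (symmPairing g) := by
  rw [sorth_liftCode_iff] at hA₀ ⊢
  rw [LinearMap.mem_ker, map_sub, sub_eq_zero, ← Matrix.ext_iff]
  refine forall₂_congr fun i j => ?_
  rw [← (torsionEmb_injective p).eq_iff, eq_neg_of_add_eq_zero_right (hA₀ i j),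
    eq_neg_iff_add_eq_zero, add_comm]

theorem exists_isSymm_torsionEmb_eq_dotProduct (horth : ∀ i j, g i ⬝ᵥ g j = 0) :
    ∃ S : Matrix (Fin k) (Fin k) (ZMod p),
      S.IsSymm ∧ ∀ i j, torsionEmb p (S i j) = lift p (g i) ⬝ᵥ lift p (g j) := by
  choose S hS using fun i j => exists_torsionEmb_eq_of_reduce_eq_zero p
      (z := lift p (g i) ⬝ᵥ lift p (g j)) <| by
    rw [reduce_dotProduct, res_lift, res_lift]
    exact horth i j
  refine ⟨Matrix.of S, Matrix.IsSymm.ext fun i j => torsionEmb_injective p ?_, hS⟩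
  simp only [Matrix.of_apply, hS, dotProduct_comm]

theorem exists_sorth_liftCode_of_neg_mem_range (hg : LinearIndependent (ZMod p) g)
    {S : Matrix (Fin k) (Fin k) (ZMod p)}
    (hS : ∀ i j, torsionEmb p (S i j) = lift p (g i) ⬝ᵥ lift p (g j))
    (hmem : -S ∈ LinearMap.range (addTranspose (ZMod p) (Fin k))) :
    ∃ A, sorth (liftCode g A : Set (ι → ZMod (p ^ 2))) := by
  rw [← range_symmPairing hg] at hmem
  obtain ⟨A, hA⟩ := hmem
  refine ⟨A, (sorth_liftCode_iff A).2 fun i j => ?_⟩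
  rw [hA, ← hS, ← map_add, Matrix.neg_apply, add_neg_cancel, map_zero]

theorem lift_two_dotProduct_self (v : ι → ZMod 2) :
    lift 2 v ⬝ᵥ lift 2 v = ((Finset.univ.filter fun i => v i ≠ 0).card : ZMod (2 ^ 2)) := by
  have hsq : ∀ x : ZMod 2, (ZMod.cast x : ZMod (2 ^ 2)) * ZMod.cast x = if x ≠ 0 then 1 else 0 := by
    decide
  simp only [dotProduct, lift, hsq, Finset.sum_boole]

theorem exists_sorth_liftCode (hg : LinearIndependent (ZMod p) g)
    (hso : sorth (Submodule.span (ZMod p) (Set.range g) : Set (ι → ZMod p)))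
    (hde : p = 2 → doublyEven (Submodule.span (ZMod p) (Set.range g) : Set (ι → ZMod p))) :
    ∃ A, sorth (liftCode g A : Set (ι → ZMod (p ^ 2))) := by
  have hmem : ∀ i, g i ∈ Submodule.span (ZMod p) (Set.range g) :=
    fun i => Submodule.subset_span ⟨i, rfl⟩
  obtain ⟨S, hSymm, hS⟩ :=
    exists_isSymm_torsionEmb_eq_dotProduct fun i j => hso _ (hmem i) _ (hmem j)
  refine exists_sorth_liftCode_of_neg_mem_range hg hS ?_
  by_cases hp : p = 2
  · subst hp
    refine mem_range_addTranspose_of_diag_eq_zero hSymm.neg fun i => ?_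
    rw [Matrix.neg_apply, neg_eq_zero, ← (torsionEmb_injective 2).eq_iff, hS, map_zero,
      lift_two_dotProduct_self, ZMod.natCast_eq_zero_iff]
    exact hde rfl _ (hmem i)
  · rw [range_addTranspose_of_two_ne_zero (two_ne_zero_of_ne_two p hp)]
    exact hSymm.neg

end SelfOrthogonal

section Count

variable {ι : Type} [Fintype ι]

def freeSelfOrthogonalLifts (p : ℕ) [Fact p.Prime] (C1 : Submodule (ZMod p) (ι → ZMod p)) :
    Set (Submodule (ZMod (p ^ 2)) (ι → ZMod (p ^ 2))) :=
  {C | sorth (C : Set (ι → ZMod (p ^ 2))) ∧ res p '' (C : Set (ι → ZMod (p ^ 2))) = C1 ∧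
    iot p ⁻¹' (C : Set (ι → ZMod (p ^ 2))) = C1}

variable {p : ℕ} [Fact p.Prime] {k : ℕ} {g : Fin k → ι → ZMod p}

theorem range_liftCode_add_ker (hg : LinearIndependent (ZMod p) g) {A₀ : Fin k → ι → ZMod p}
    (hA₀ : sorth (liftCode g A₀ : Set (ι → ZMod (p ^ 2)))) :
    Set.range (fun B : LinearMap.ker (symmPairing g) => liftCode g (A₀ + B)) =
      freeSelfOrthogonalLifts p (Submodule.span (ZMod p) (Set.range g)) := by
  ext C
  constructor
  · rintro ⟨B, rfl⟩
    refine ⟨(sorth_liftCode_iff_sub_mem_ker hA₀ _).2 ?_, res_image_liftCode g _,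
      iot_preimage_liftCode hg _⟩
    simp
  · rintro ⟨hso, hres, hiot⟩
    obtain ⟨A, rfl⟩ := exists_liftCode_eq hg hres hiot
    exact ⟨⟨A - A₀, (sorth_liftCode_iff_sub_mem_ker hA₀ A).1 hso⟩, by simp⟩

theorem pi_span_le_ker_symmPairing
    (hso : sorth (Submodule.span (ZMod p) (Set.range g) : Set (ι → ZMod p))) :
    Submodule.pi Set.univ (fun _ : Fin k => Submodule.span (ZMod p) (Set.range g)) ≤
      LinearMap.ker (symmPairing g) := by
  intro B hB
  have hdot : ∀ x ∈ Submodule.span (ZMod p) (Set.range g),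
      ∀ y ∈ Submodule.span (ZMod p) (Set.range g), x ⬝ᵥ y = 0 := hso
  have hg : ∀ i, g i ∈ Submodule.span (ZMod p) (Set.range g) :=
    fun i => Submodule.subset_span ⟨i, rfl⟩
  rw [Submodule.mem_pi] at hB
  ext i j
  rw [symmPairing_apply, hdot _ (hB i trivial) _ (hg j), hdot _ (hB j trivial) _ (hg i), add_zero,
    Matrix.zero_apply]

theorem ncard_freeSelfOrthogonalLifts_mul (hg : LinearIndependent (ZMod p) g)
    (hso : sorth (Submodule.span (ZMod p) (Set.range g) : Set (ι → ZMod p)))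
    {A₀ : Fin k → ι → ZMod p} (hA₀ : sorth (liftCode g A₀ : Set (ι → ZMod (p ^ 2)))) :
    (freeSelfOrthogonalLifts p (Submodule.span (ZMod p) (Set.range g))).ncard * p ^ (k * k) =
      p ^ Module.finrank (ZMod p) (LinearMap.ker (symmPairing g)) := by
  set V := LinearMap.ker (symmPairing g)
  set W := Submodule.pi Set.univ fun _ : Fin k => Submodule.span (ZMod p) (Set.range g)
  have hW : Nat.card (W.comap V.subtype).toAddSubgroup = p ^ (k * k) := by
    change Nat.card (W.comap V.subtype) = _
    rw [Nat.card_congr (Submodule.comapSubtypeEquivOfLe (pi_span_le_ker_symmPairing hso)).toEquiv,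
      natCard_pi_univ_const, Module.natCard_eq_pow_finrank (K := ZMod p),
      finrank_span_eq_card hg, Nat.card_zmod, Fintype.card_fin, ← pow_mul]
  rw [← Nat.card_coe_set_eq, ← range_liftCode_add_ker hg hA₀, ← hW,
    natCard_range_mul_natCard _ fun B B' => ?_, Module.natCard_eq_pow_finrank (K := ZMod p),
    Nat.card_zmod]
  rw [liftCode_eq_liftCode_iff hg, Submodule.mem_toAddSubgroup, Submodule.mem_comap,
    Submodule.mem_pi]
  simp [neg_add_eq_sub]

end Count

theorem stmt5_general (p n k1 : ℕ) [Fact p.Prime]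
    (C1 : Submodule (ZMod p) (Fin n → ZMod p))
    (hso : sorth (C1 : Set (Fin n → ZMod p)))
    (hdim : Module.finrank (ZMod p) C1 = k1)
    (hde : p = 2 → doublyEven (C1 : Set (Fin n → ZMod p))) :
    {C : Submodule (ZMod (p ^ 2)) (Fin n → ZMod (p ^ 2)) |
        sorth (C : Set (Fin n → ZMod (p ^ 2))) ∧
        res p '' (C : Set (Fin n → ZMod (p ^ 2))) = (C1 : Set (Fin n → ZMod p)) ∧
        iot p ⁻¹' (C : Set (Fin n → ZMod (p ^ 2))) = (C1 : Set (Fin n → ZMod p))}.ncard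
      = if p = 2 then 2 ^ (k1 * (2 * n - 3 * k1 + 1) / 2)
        else p ^ (k1 * (2 * n - 3 * k1 - 1) / 2) := by
  obtain ⟨g, hg, rfl⟩ := exists_linearIndependent_span_eq C1 hdim
  have hkn : 2 * k1 ≤ n := by
    simpa using two_mul_le_card_of_dotProduct_eq_zero hg fun i j =>
      hso _ (Submodule.subset_span ⟨i, rfl⟩) _ (Submodule.subset_span ⟨j, rfl⟩)
  obtain ⟨A₀, hA₀⟩ := exists_sorth_liftCode hg hso hde
  have hcount := ncard_freeSelfOrthogonalLifts_mul hg hso hA₀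
  have hker := finrank_ker_symmPairing_add hg
  rw [Fintype.card_fin] at hker
  change (freeSelfOrthogonalLifts p _).ncard = _
  rw [eq_pow_sub_of_mul_pow_eq (Fact.out : p.Prime).one_lt hcount]
  split_ifs with hp
  · subst hp
    have hrank := LinearMap.finrank_range_add_finrank_ker (addTranspose (ZMod 2) (Fin k1))
    rw [ker_addTranspose_of_charP_two, finrank_symmetricMatrices, Module.finrank_matrix] at hrank
    rw [exponent_eq_of_two hkn hker (by simpa using hrank)]
  · rw [range_addTranspose_of_two_ne_zero (two_ne_zero_of_ne_two p hp),
      finrank_symmetricMatrices, Fintype.card_fin] at hker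
    rw [exponent_eq_of_two_ne hkn hker]

/-- the number of free self-orthogonal codes `C ⊆ (Z_{p^2})^n` with
`π(C) = ι⁻¹(C) = C₁` is `p^{k₁(2n−3k₁−1)/2}` for odd `p` and `2^{k₁(2n−3k₁+1)/2}` for `p = 2`. -/
theorem stmt5 (p n k1 : ℕ) [Fact p.Prime] (hn : 0 < n)
    (C1 : Submodule (ZMod p) (Fin n → ZMod p))
    (hso : sorth (C1 : Set (Fin n → ZMod p)))
    (hdim : Module.finrank (ZMod p) C1 = k1)
    (hde : p = 2 → doublyEven (C1 : Set (Fin n → ZMod p))) :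
    {C : Submodule (ZMod (p ^ 2)) (Fin n → ZMod (p ^ 2)) |
        sorth (C : Set (Fin n → ZMod (p ^ 2))) ∧
        res p '' (C : Set (Fin n → ZMod (p ^ 2))) = (C1 : Set (Fin n → ZMod p)) ∧
        iot p ⁻¹' (C : Set (Fin n → ZMod (p ^ 2))) = (C1 : Set (Fin n → ZMod p))}.ncard
      = if p = 2 then 2 ^ (k1 * (2 * n - 3 * k1 + 1) / 2)
        else p ^ (k1 * (2 * n - 3 * k1 - 1) / 2) :=
  stmt5_general p n k1 C1 hso hdim hde

end Paper
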